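/- The topological space c₀ \ ⋃_{j=1}^∞ E^j, with the subspace topology, is homeomorphic to c₀. -/

import Mathlib

open scoped ZeroAtInfty

/-- The union `⋃ₙ Eⁿ` of the sets `Eⁿ = {x ∈ c₀ : x_k = 0 ∀ k > n}`:
the eventually-zero sequences. -/
def evZero (K : Type*) [NontriviallyNormedField K] : Set C₀(ℕ, K) :=
  ⋃ n : ℕ, {x | ∀ k, n ≤ k → x k = 0}

/-!
Both spaces are homeomorphic to the Baire space `ℕ → ℕ`. In an ultrametric space the closed
balls of radius `ρ n x` form a clopen partition as soon as `ρ n` is constant on them. If these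
partitions refine each other, every ball splits into infinitely many balls of the next level
(countably many, by separability), the radii tend to zero and nested chains of balls meet, then
recording at each level which child ball contains a point is a homeomorphism onto `ℕ → ℕ`.
For `c₀` one takes the radii `|π|ⁿ` with `0 < |π| < 1`. On the complement of the
eventually-zero sequences one takes `|π|ⁿ⁺¹ · sup_{k ≥ n} |x_k|` instead: moving by less than
this radius does not change the tail supremum, so the limit of a nested chain still has nonzero
entries beyond every `n`.
-/

open Filter Topology Metric Set TopologicalSpace

lemma Set.Infinite.exists_bijOn_nat {α : Type*} {s : Set α} (hi : s.Infinite)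
    (hc : s.Countable) : ∃ e : α → ℕ, BijOn e s univ := by
  classical
  have := hi.to_subtype
  have := hc.to_subtype
  obtain ⟨e⟩ : Nonempty (s ≃ ℕ) := nonempty_equiv_of_countable
  refine ⟨fun a => if ha : a ∈ s then e ⟨a, ha⟩ else 0, fun _ _ => trivial, ?_, ?_⟩
  · intro a ha b hb hab
    simpa [ha, hb] using hab
  · intro k _
    exact ⟨e.symm k, (e.symm k).2, by simp⟩

section LusinScheme

variable {X : Type*} [TopologicalSpace X]

/-- `P n x` is the piece containing `x` of the `n`-th partition of `X`. -/
structure IsLusinScheme (P : ℕ → X → Set X) : Prop where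
  zero_eq_univ : ∀ x, P 0 x = univ
  mem_self : ∀ n x, x ∈ P n x
  eq_of_mem : ∀ {n x y}, y ∈ P n x → P n y = P n x
  isOpen : ∀ n x, IsOpen (P n x)
  succ_subset : ∀ n x, P (n + 1) x ⊆ P n x
  infinite_children : ∀ n x, (P (n + 1) '' P n x).Infinite
  exists_subset_of_mem_nhds : ∀ x, ∀ U ∈ 𝓝 x, ∃ n, P n x ⊆ U
  exists_mem_of_succ_mem : ∀ u : ℕ → X, (∀ n, u (n + 1) ∈ P n (u n)) →
    ∃ x, ∀ n, x ∈ P n (u n)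

namespace IsLusinScheme

variable {P : ℕ → X → Set X}

lemma countable_range (h : IsLusinScheme P) [SeparableSpace X] (n : ℕ) :
    (range (P n)).Countable := by
  obtain ⟨D, hDc, hDd⟩ := exists_countable_dense X
  refine (hDc.image (P n)).mono ?_
  rintro _ ⟨x, rfl⟩
  obtain ⟨d, hdP, hdD⟩ := hDd.inter_open_nonempty (P n x) (h.isOpen n x) ⟨x, h.mem_self n x⟩
  exact ⟨d, hdD, h.eq_of_mem hdP⟩

lemma exists_childIndex (h : IsLusinScheme P) [SeparableSpace X] (n : ℕ) (S : Set X) :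
    ∃ e : Set X → ℕ, ∀ x, P n x = S → BijOn e (P (n + 1) '' S) univ := by
  by_cases hS : ∃ x, P n x = S
  · obtain ⟨x, rfl⟩ := hS
    obtain ⟨e, he⟩ := (h.infinite_children n x).exists_bijOn_nat
      ((h.countable_range (n + 1)).mono (image_subset_range _ _))
    exact ⟨e, fun _ _ => he⟩
  · exact ⟨0, fun x hx => (hS ⟨x, hx⟩).elim⟩

variable (h : IsLusinScheme P) [SeparableSpace X]

noncomputable def childIndex (n : ℕ) (S : Set X) : Set X → ℕ :=
  (h.exists_childIndex n S).choose

lemma bijOn_childIndex (n : ℕ) (x : X) :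
    BijOn (h.childIndex n (P n x)) (P (n + 1) '' P n x) univ :=
  (h.exists_childIndex n (P n x)).choose_spec x rfl

noncomputable def coding (x : X) (n : ℕ) : ℕ :=
  h.childIndex n (P n x) (P (n + 1) x)

lemma coding_eq_of_mem {n : ℕ} {x y : X} (hy : y ∈ P (n + 1) x) :
    h.coding y n = h.coding x n := by
  simp only [coding, h.eq_of_mem hy, h.eq_of_mem (h.succ_subset n x hy)]

lemma continuous_coding : Continuous h.coding :=
  continuous_pi fun _ => IsLocallyConstant.continuous <|
    (IsLocallyConstant.iff_eventually_eq _).2 fun x =>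
      eventually_of_mem ((h.isOpen _ x).mem_nhds (h.mem_self _ x)) fun _ => h.coding_eq_of_mem

lemma eq_of_coding_mem_cylinder {n : ℕ} {x y : X}
    (hxy : h.coding y ∈ PiNat.cylinder (h.coding x) n) : P n y = P n x := by
  induction n with
  | zero => rw [h.zero_eq_univ, h.zero_eq_univ]
  | succ n ih =>
    rw [PiNat.mem_cylinder_iff] at hxy
    have hn : P n y = P n x := ih fun i hi => hxy i (hi.trans n.lt_succ_self)
    have hcode :
        h.childIndex n (P n x) (P (n + 1) y) = h.childIndex n (P n x) (P (n + 1) x) := by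
      simpa only [coding, hn] using hxy n n.lt_succ_self
    exact (h.bijOn_childIndex n x).injOn ⟨y, hn ▸ h.mem_self n y, rfl⟩
      ⟨x, h.mem_self n x, rfl⟩ hcode

lemma isInducing_coding : IsInducing h.coding := by
  refine isInducing_iff_nhds.2 fun x => le_antisymm (h.continuous_coding.tendsto x).le_comap ?_
  intro U hU
  obtain ⟨n, hn⟩ := h.exists_subset_of_mem_nhds x U hU
  refine ⟨PiNat.cylinder (h.coding x) n, (PiNat.isOpen_cylinder _ (h.coding x) n).mem_nhds
    (PiNat.self_mem_cylinder _ n), fun y hy => hn ?_⟩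
  rw [← h.eq_of_coding_mem_cylinder hy]
  exact h.mem_self n y

lemma surjective_coding [Nonempty X] : Function.Surjective h.coding := by
  intro β
  have hstep : ∀ n (z : X), ∃ y ∈ P n z, h.childIndex n (P n z) (P (n + 1) y) = β n := by
    intro n z
    obtain ⟨_, ⟨y, hy, rfl⟩, hyβ⟩ := (h.bijOn_childIndex n z).surjOn (mem_univ (β n))
    exact ⟨y, hy, hyβ⟩
  choose next hnext_mem hnext using hstep
  let u : ℕ → X := fun n => Nat.rec (Classical.arbitrary X) next n
  obtain ⟨x, hx⟩ := h.exists_mem_of_succ_mem u fun n => hnext_mem n (u n)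
  refine ⟨x, funext fun n => ?_⟩
  rw [coding, h.eq_of_mem (hx n), h.eq_of_mem (hx (n + 1))]
  exact hnext n (u n)

theorem nonempty_homeomorph (h : IsLusinScheme P) [T0Space X] [Nonempty X] :
    Nonempty (X ≃ₜ (ℕ → ℕ)) :=
  ⟨(Equiv.ofBijective h.coding ⟨h.isInducing_coding.injective, h.surjective_coding⟩)
    |>.toHomeomorphOfIsInducing h.isInducing_coding⟩

end IsLusinScheme

end LusinScheme

section BallScheme

variable {X : Type*} [MetricSpace X]

structure IsBallScheme (ρ : ℕ → X → ℝ) : Prop where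
  pos : ∀ n x, 0 < ρ n x
  eq_of_dist_le : ∀ {n x y}, dist y x ≤ ρ n x → ρ n y = ρ n x
  succ_le : ∀ n x, ρ (n + 1) x ≤ ρ n x
  tendsto_zero : ∀ x, Tendsto (ρ · x) atTop (𝓝 0)
  exists_root : ∃ y : ℕ → X, Pairwise fun i j => ρ 0 (y i) < dist (y i) (y j)
  exists_branch : ∀ n x, ∃ y : ℕ → X, (∀ j, dist (y j) x ≤ ρ n x) ∧
    Pairwise fun i j => ρ (n + 1) (y i) < dist (y i) (y j)
  exists_limit : ∀ u : ℕ → X, (∀ n, dist (u (n + 1)) (u n) ≤ ρ n (u n)) →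
    ∃ x, ∀ n, dist x (u n) ≤ ρ n (u n)

def ballScheme (ρ : ℕ → X → ℝ) : ℕ → X → Set X
  | 0, _ => univ
  | n + 1, x => closedBall x (ρ n x)

lemma injective_closedBall_of_pairwise {r : X → ℝ} {y : ℕ → X} (hr : ∀ j, 0 ≤ r (y j))
    (hy : Pairwise fun i j => r (y i) < dist (y i) (y j)) :
    Function.Injective fun j => closedBall (y j) (r (y j)) := by
  intro i j hij
  by_contra hne
  have hj : y j ∈ closedBall (y i) (r (y i)) := by
    simp only at hij
    exact hij ▸ mem_closedBall_self (hr j)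
  exact (hy hne).not_ge (dist_comm (y i) (y j) ▸ hj)

namespace IsBallScheme

variable [IsUltrametricDist X] {ρ : ℕ → X → ℝ}

theorem isLusinScheme (h : IsBallScheme ρ) : IsLusinScheme (ballScheme ρ) where
  zero_eq_univ _ := rfl
  mem_self n x := by
    cases n
    · exact mem_univ x
    · exact mem_closedBall_self (h.pos _ x).le
  eq_of_mem := by
    rintro (_ | n) x y hy
    · rfl
    · change closedBall y (ρ n y) = closedBall x (ρ n x)
      rw [h.eq_of_dist_le hy]
      exact (IsUltrametricDist.closedBall_eq_of_mem hy).symm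
  isOpen n x := by
    cases n
    · exact isOpen_univ
    · exact IsUltrametricDist.isOpen_closedBall x (h.pos _ x).ne'
  succ_subset n x := by
    cases n
    · exact subset_univ _
    · exact closedBall_subset_closedBall (h.succ_le _ x)
  infinite_children n x := by
    cases n with
    | zero =>
      obtain ⟨y, hy⟩ := h.exists_root
      exact infinite_of_injective_forall_mem
        (injective_closedBall_of_pairwise (fun j => (h.pos 0 (y j)).le) hy)
        fun j => mem_image_of_mem _ (mem_univ (y j))
    | succ n =>
      obtain ⟨y, hyx, hy⟩ := h.exists_branch n x
      exact infinite_of_injective_forall_mem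
        (injective_closedBall_of_pairwise (fun j => (h.pos (n + 1) (y j)).le) hy)
        fun j => mem_image_of_mem _ (hyx j)
  exists_subset_of_mem_nhds x U hU := by
    obtain ⟨ε, hε, hball⟩ := Metric.mem_nhds_iff.1 hU
    obtain ⟨n, hn⟩ := ((h.tendsto_zero x).eventually (gt_mem_nhds hε)).exists
    exact ⟨n + 1, (closedBall_subset_ball hn).trans hball⟩
  exists_mem_of_succ_mem u hu := by
    obtain ⟨x, hx⟩ := h.exists_limit (fun n => u (n + 1)) fun n => hu (n + 1)
    refine ⟨x, fun n => ?_⟩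
    cases n
    · exact mem_univ x
    · exact hx _

theorem nonempty_homeomorph [SeparableSpace X] (h : IsBallScheme ρ) :
    Nonempty (X ≃ₜ (ℕ → ℕ)) :=
  have : Nonempty X := ⟨h.exists_root.choose 0⟩
  h.isLusinScheme.nonempty_homeomorph

end IsBallScheme

end BallScheme

lemma IsUltrametricDist.exists_dist_le_of_dist_succ_le {X : Type*} [PseudoMetricSpace X]
    [IsUltrametricDist X] [CompleteSpace X] {u : ℕ → X} {ε : ℕ → ℝ} (hε : Antitone ε)
    (hε0 : Tendsto ε atTop (𝓝 0)) (hu : ∀ n, dist (u (n + 1)) (u n) ≤ ε n) :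
    ∃ x, ∀ n, dist x (u n) ≤ ε n := by
  have hle : ∀ n m, n ≤ m → dist (u m) (u n) ≤ ε n := by
    intro n m hnm
    induction m, hnm using Nat.le_induction with
    | base => simpa using hε.le_of_tendsto hε0 n
    | succ m hnm ih =>
      exact (dist_triangle_max _ (u m) _).trans (max_le ((hu m).trans (hε hnm)) ih)
  have hcauchy : CauchySeq u := cauchySeq_of_le_tendsto_0 ε (fun n m N hn hm =>
    (dist_triangle_max _ (u N) _).trans
      (max_le (hle N n hn) (dist_comm (u m) (u N) ▸ hle N m hm))) hε0
  obtain ⟨x, hx⟩ := cauchySeq_tendsto_of_complete hcauchy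
  exact ⟨x, fun n => le_of_tendsto (hx.dist tendsto_const_nhds)
    (eventually_atTop.2 ⟨n, fun m hm => hle n m hm⟩)⟩

namespace ZeroAtInftyContinuousMap

section Metric

variable {α β : Type*} [TopologicalSpace α] [PseudoMetricSpace β] [Zero β]

lemma dist_le {f g : C₀(α, β)} {C : ℝ} (hC : 0 ≤ C) :
    dist f g ≤ C ↔ ∀ x, dist (f x) (g x) ≤ C := by
  rw [← dist_toBCF_eq_dist, BoundedContinuousFunction.dist_le hC]
  rfl

lemma dist_apply_le_dist (f g : C₀(α, β)) (x : α) : dist (f x) (g x) ≤ dist f g :=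
  (BoundedContinuousFunction.dist_coe_le_dist (f := f.toBCF) (g := g.toBCF) x).trans_eq
    dist_toBCF_eq_dist

instance [IsUltrametricDist β] : IsUltrametricDist C₀(α, β) where
  dist_triangle_max f g h := (dist_le (le_max_of_le_left dist_nonneg)).2 fun x =>
    (dist_triangle_max (f x) (g x) (h x)).trans
      (max_le_max (dist_apply_le_dist f g x) (dist_apply_le_dist g h x))

end Metric

variable {E : Type*} [NormedAddCommGroup E]

lemma tendsto_atTop (f : C₀(ℕ, E)) : Tendsto f atTop (𝓝 0) :=
  cocompact_eq_atTop (α := ℕ) ▸ zero_at_infty f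

lemma norm_apply_le (f : C₀(ℕ, E)) (k : ℕ) : ‖f k‖ ≤ ‖f‖ := by
  simpa using dist_apply_le_dist f 0 k

def ofTendstoAtTop (f : ℕ → E) (hf : Tendsto f atTop (𝓝 0)) : C₀(ℕ, E) :=
  ⟨⟨f, continuous_of_discreteTopology⟩, cocompact_eq_atTop (α := ℕ) ▸ hf⟩

@[simp]
lemma coe_ofTendstoAtTop (f : ℕ → E) (hf : Tendsto f atTop (𝓝 0)) :
    ⇑(ofTendstoAtTop f hf) = f :=
  rfl

def single (k : ℕ) (a : E) : C₀(ℕ, E) :=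
  ofTendstoAtTop (Pi.single k a : ℕ → E) <| tendsto_const_nhds.congr' <|
    eventually_atTop.2 ⟨k + 1, fun j hj => by rw [Pi.single_eq_of_ne (show j ≠ k by omega)]⟩

@[simp]
lemma coe_single (k : ℕ) (a : E) : ⇑(single k a) = (Pi.single k a : ℕ → E) :=
  rfl

lemma norm_single (k : ℕ) (a : E) : ‖single k a‖ = ‖a‖ := by
  refine le_antisymm ?_ (by simpa using norm_apply_le (single k a) k)
  rw [← dist_zero_right, dist_le (norm_nonneg a)]
  intro j
  rcases eq_or_ne j k with rfl | hj
  · simp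
  · simp [hj]

lemma dist_single_single_of_ne {i j : ℕ} (hij : i ≠ j) (a : E) :
    dist (single i a) (single j a) = ‖a‖ := by
  refine le_antisymm ((dist_le (norm_nonneg a)).2 fun k => ?_)
    (by simpa [hij] using dist_apply_le_dist (single i a) (single j a) i)
  rcases eq_or_ne k i with rfl | hki
  · simp [hij]
  rcases eq_or_ne k j with rfl | hkj
  · simp [hki]
  · simp [hki, hkj]

instance [SeparableSpace E] : SecondCountableTopology C₀(ℕ, E) := by
  obtain ⟨S, hSc, hSd⟩ := exists_countable_dense E
  have := hSc.to_subtype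
  let trunc (N : ℕ) (v : Fin N → S) : C₀(ℕ, E) :=
    ofTendstoAtTop (fun k => if hk : k < N then (v ⟨k, hk⟩ : E) else 0) <|
      tendsto_const_nhds.congr' <| eventually_atTop.2 ⟨N, fun k hk => by simp [hk.not_gt]⟩
  refine secondCountable_of_almost_dense_set fun ε hε =>
    ⟨⋃ N, range (trunc N), countable_iUnion fun N => countable_range _, fun x => ?_⟩
  obtain ⟨N, hN⟩ := eventually_atTop.1 <|
    (tendsto_zero_iff_norm_tendsto_zero.1 (tendsto_atTop x)).eventually (gt_mem_nhds hε)
  choose v hvS hv using fun k => hSd.exists_dist_lt (x k) hε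
  let w : Fin N → S := fun i => ⟨v i, hvS i⟩
  refine ⟨trunc N w, mem_iUnion.2 ⟨N, w, rfl⟩, (dist_le hε.le).2 fun k => ?_⟩
  by_cases hk : k < N
  · simpa [trunc, w, hk] using (hv k).le
  · simpa [trunc, hk] using (hN k (not_lt.1 hk)).le

noncomputable def tailNorm (n : ℕ) (x : C₀(ℕ, E)) : ℝ :=
  ⨆ k, ‖x (k + n)‖

lemma norm_apply_le_tailNorm (x : C₀(ℕ, E)) {n k : ℕ} (hk : n ≤ k) :
    ‖x k‖ ≤ tailNorm n x := by
  obtain ⟨i, rfl⟩ := Nat.exists_eq_add_of_le' hk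
  exact le_ciSup (f := fun k => ‖x (k + n)‖)
    ⟨‖x‖, forall_mem_range.2 fun k => norm_apply_le x _⟩ i

lemma tailNorm_nonneg (n : ℕ) (x : C₀(ℕ, E)) : 0 ≤ tailNorm n x :=
  (norm_nonneg _).trans (norm_apply_le_tailNorm x le_rfl)

lemma tailNorm_le_norm (n : ℕ) (x : C₀(ℕ, E)) : tailNorm n x ≤ ‖x‖ :=
  ciSup_le fun _ => norm_apply_le x _

lemma tailNorm_succ_le (n : ℕ) (x : C₀(ℕ, E)) : tailNorm (n + 1) x ≤ tailNorm n x :=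
  ciSup_le fun _ => norm_apply_le_tailNorm x (by omega)

lemma tailNorm_pos_iff {n : ℕ} {x : C₀(ℕ, E)} :
    0 < tailNorm n x ↔ ∃ k, n ≤ k ∧ x k ≠ 0 := by
  constructor
  · intro h
    obtain ⟨k, hk⟩ := exists_lt_of_lt_ciSup h
    exact ⟨k + n, le_add_self, norm_pos_iff.1 hk⟩
  · rintro ⟨k, hk, hx⟩
    exact (norm_pos_iff.2 hx).trans_le (norm_apply_le_tailNorm x hk)

variable [IsUltrametricDist E]

lemma tailNorm_le_max (n : ℕ) (x y : C₀(ℕ, E)) :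
    tailNorm n x ≤ max (tailNorm n y) (dist x y) :=
  ciSup_le fun k => calc
    ‖x (k + n)‖ = ‖y (k + n) + (x (k + n) - y (k + n))‖ := by rw [add_sub_cancel]
    _ ≤ max ‖y (k + n)‖ ‖x (k + n) - y (k + n)‖ := IsUltrametricDist.norm_add_le_max _ _
    _ ≤ max (tailNorm n y) (dist x y) :=
      max_le_max (norm_apply_le_tailNorm y le_add_self)
        (dist_eq_norm (x (k + n)) _ ▸ dist_apply_le_dist x y _)

lemma tailNorm_eq_of_dist_lt {n : ℕ} {x y : C₀(ℕ, E)} (h : dist y x < tailNorm n x) :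
    tailNorm n y = tailNorm n x := by
  refine le_antisymm ((tailNorm_le_max n y x).trans (max_le le_rfl h.le)) ?_
  rcases le_max_iff.1 (tailNorm_le_max n x y) with hxy | hxy
  · exact hxy
  · exact absurd (dist_comm x y ▸ hxy) h.not_ge

end ZeroAtInftyContinuousMap

open ZeroAtInftyContinuousMap

section SequenceSpace

variable {K : Type*} [NontriviallyNormedField K] {π : K}

lemma NormedField.exists_norm_mem_Ioc (hπ0 : 0 < ‖π‖) (hπ1 : ‖π‖ < 1) {ρ : ℝ}
    (hρ : 0 < ρ) :
    ∃ d : K, ‖d‖ ∈ Ioc (‖π‖ * ρ) ρ := by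
  obtain ⟨k, hk, hk'⟩ := exists_mem_Ico_zpow hρ ((one_lt_inv₀ hπ0).2 hπ1)
  refine ⟨π⁻¹ ^ k, ?_, ?_⟩ <;> rw [norm_zpow, norm_inv]
  · rw [zpow_add_one₀ (inv_ne_zero hπ0.ne')] at hk'
    calc ‖π‖ * ρ < ‖π‖ * (‖π‖⁻¹ ^ k * ‖π‖⁻¹) := by gcongr
      _ = ‖π‖⁻¹ ^ k := by field_simp
  · exact hk

theorem isBallScheme_pow [IsUltrametricDist K] [CompleteSpace K] (hπ0 : 0 < ‖π‖)
    (hπ1 : ‖π‖ < 1) :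
    IsBallScheme fun n (_ : C₀(ℕ, K)) => ‖π‖ ^ n where
  pos n _ := pow_pos hπ0 n
  eq_of_dist_le _ := rfl
  succ_le n _ := pow_le_pow_of_le_one hπ0.le hπ1.le n.le_succ
  tendsto_zero _ := tendsto_pow_atTop_nhds_zero_of_lt_one hπ0.le hπ1
  exists_root := ⟨fun j => single j π⁻¹, fun i j hij => by
    simpa [dist_single_single_of_ne hij] using (one_lt_inv₀ hπ0).2 hπ1⟩
  exists_branch n x := ⟨fun j => x + single j (π ^ n),
    fun j => by rw [dist_self_add_left, norm_single, norm_pow],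
    fun i j hij => by
      dsimp only
      rw [dist_add_left, dist_single_single_of_ne hij, norm_pow]
      exact pow_lt_pow_right_of_lt_one₀ hπ0 hπ1 n.lt_succ_self⟩
  exists_limit _ hu := IsUltrametricDist.exists_dist_le_of_dist_succ_le
    (fun _ _ h => pow_le_pow_of_le_one hπ0.le hπ1.le h)
    (tendsto_pow_atTop_nhds_zero_of_lt_one hπ0.le hπ1) hu

lemma mem_compl_evZero_iff {x : C₀(ℕ, K)} :
    x ∈ (evZero K)ᶜ ↔ ∀ n, 0 < tailNorm n x := by
  simp [evZero, tailNorm_pos_iff]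

lemma tailNorm_pos (x : ↥(evZero K)ᶜ) (n : ℕ) : 0 < tailNorm n (x : C₀(ℕ, K)) :=
  mem_compl_evZero_iff.1 x.2 n

lemma add_single_mem_compl_evZero {x : C₀(ℕ, K)} (hx : x ∈ (evZero K)ᶜ) (j : ℕ) (d : K) :
    x + single j d ∈ (evZero K)ᶜ := by
  refine mem_compl_evZero_iff.2 fun n => tailNorm_pos_iff.2 ?_
  obtain ⟨k, hk, hxk⟩ := tailNorm_pos_iff.1 (mem_compl_evZero_iff.1 hx (max n (j + 1)))
  refine ⟨k, le_of_max_le_left hk, ?_⟩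
  simpa [Pi.single_eq_of_ne (show k ≠ j by omega)] using hxk

variable (π) in
noncomputable def tailRadius (n : ℕ) (x : C₀(ℕ, K)) : ℝ :=
  ‖π‖ ^ (n + 1) * tailNorm n x

variable [IsUltrametricDist K]

lemma tailNorm_eq_of_dist_le_tailRadius (hπ1 : ‖π‖ < 1) {n : ℕ} {x y : C₀(ℕ, K)}
    (hx : 0 < tailNorm n x) (h : dist y x ≤ tailRadius π n x) : tailNorm n y = tailNorm n x :=
  tailNorm_eq_of_dist_lt <| h.trans_lt <|
    mul_lt_of_lt_one_left hx (pow_lt_one₀ (norm_nonneg π) hπ1 (n.succ_ne_zero))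

lemma tailRadius_succ_le (hπ0 : 0 < ‖π‖) (hπ1 : ‖π‖ < 1) {n : ℕ} {x y : C₀(ℕ, K)}
    (hx : 0 < tailNorm n x) (h : dist y x ≤ tailRadius π n x) :
    tailRadius π (n + 1) y ≤ ‖π‖ * tailRadius π n x := by
  rw [tailRadius, tailRadius, ← mul_assoc, ← pow_succ',
    ← tailNorm_eq_of_dist_le_tailRadius hπ1 hx h]
  exact mul_le_mul_of_nonneg_left (tailNorm_succ_le n y) (by positivity)

lemma exists_pairwise_tailRadius_zero_lt_dist (hπ0 : 0 < ‖π‖) (hπ1 : ‖π‖ < 1) :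
    ∃ y : ℕ → ↥(evZero K)ᶜ,
      Pairwise fun i j => tailRadius π 0 (y i) < dist (y i) (y j) := by
  let x₀ : C₀(ℕ, K) :=
    ofTendstoAtTop (π ^ ·) (tendsto_pow_atTop_nhds_zero_of_norm_lt_one hπ1)
  have hx₀ : x₀ ∈ (evZero K)ᶜ := mem_compl_evZero_iff.2 fun n =>
    tailNorm_pos_iff.2 ⟨n, le_rfl, pow_ne_zero n (norm_pos_iff.1 hπ0)⟩
  obtain ⟨d, hd⟩ := NormedField.exists_lt_norm K ‖x₀‖
  refine ⟨fun j => ⟨x₀ + single j d, add_single_mem_compl_evZero hx₀ j d⟩,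
    fun i j hij => ?_⟩
  have hnorm : ‖x₀ + single i d‖ ≤ ‖d‖ :=
    (IsUltrametricDist.norm_add_le_max _ _).trans (by simp [norm_single, hd.le])
  change tailRadius π 0 (x₀ + single i d) < dist (x₀ + single i d) (x₀ + single j d)
  rw [tailRadius, zero_add, pow_one, dist_add_left, dist_single_single_of_ne hij]
  calc ‖π‖ * tailNorm 0 (x₀ + single i d) ≤ ‖π‖ * ‖d‖ :=
        mul_le_mul_of_nonneg_left ((tailNorm_le_norm 0 _).trans hnorm) hπ0.le
    _ < ‖d‖ := mul_lt_of_lt_one_left ((norm_nonneg _).trans_lt hd) hπ1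

lemma exists_pairwise_tailRadius_succ_lt_dist (hπ0 : 0 < ‖π‖) (hπ1 : ‖π‖ < 1) (n : ℕ)
    (x : ↥(evZero K)ᶜ) :
    ∃ y : ℕ → ↥(evZero K)ᶜ, (∀ j, dist (y j) x ≤ tailRadius π n x) ∧
      Pairwise fun i j => tailRadius π (n + 1) (y i) < dist (y i) (y j) := by
  obtain ⟨d, hd_lt, hd_le⟩ :=
    NormedField.exists_norm_mem_Ioc hπ0 hπ1 (mul_pos (pow_pos hπ0 (n + 1)) (tailNorm_pos x n))
  have hdist (j : ℕ) : dist (x.1 + single j d) x.1 ≤ tailRadius π n x.1 := by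
    rwa [dist_self_add_left, norm_single]
  refine ⟨fun j => ⟨x + single j d, add_single_mem_compl_evZero x.2 j d⟩, hdist,
    fun i j hij => ?_⟩
  calc tailRadius π (n + 1) (x.1 + single i d) ≤ ‖π‖ * tailRadius π n x.1 :=
        tailRadius_succ_le hπ0 hπ1 (tailNorm_pos x n) (hdist i)
    _ < ‖d‖ := hd_lt
    _ = dist (x.1 + single i d) (x.1 + single j d) := by
      rw [dist_add_left, dist_single_single_of_ne hij]

lemma exists_dist_le_tailRadius [CompleteSpace K] (hπ0 : 0 < ‖π‖) (hπ1 : ‖π‖ < 1)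
    {u : ℕ → ↥(evZero K)ᶜ} (hu : ∀ n, dist (u (n + 1)) (u n) ≤ tailRadius π n (u n)) :
    ∃ x : ↥(evZero K)ᶜ, ∀ n, dist x (u n) ≤ tailRadius π n (u n) := by
  set ε : ℕ → ℝ := fun n => tailRadius π n (u n)
  have hε0 (n : ℕ) : 0 ≤ ε n := mul_nonneg (by positivity) (tailNorm_pos (u n) n).le
  have hε (n : ℕ) : ε (n + 1) ≤ ‖π‖ * ε n :=
    tailRadius_succ_le hπ0 hπ1 (tailNorm_pos (u n) n) (hu n)
  have hanti : Antitone ε :=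
    antitone_nat_of_succ_le fun n => (hε n).trans (mul_le_of_le_one_left (hε0 n) hπ1.le)
  have htendsto : Tendsto ε atTop (𝓝 0) :=
    squeeze_zero hε0 (fun n => le_geom hπ0.le n fun k _ => hε k)
      (by simpa using (tendsto_pow_atTop_nhds_zero_of_lt_one hπ0.le hπ1).mul_const (ε 0))
  obtain ⟨x, hx⟩ := IsUltrametricDist.exists_dist_le_of_dist_succ_le
    (u := fun n => (u n : C₀(ℕ, K))) hanti htendsto hu
  have hxX : x ∈ (evZero K)ᶜ := mem_compl_evZero_iff.2 fun n =>
    (tailNorm_eq_of_dist_le_tailRadius hπ1 (tailNorm_pos (u n) n) (hx n)).symm ▸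
      tailNorm_pos (u n) n
  exact ⟨⟨x, hxX⟩, hx⟩

theorem isBallScheme_tailRadius [CompleteSpace K] (hπ0 : 0 < ‖π‖) (hπ1 : ‖π‖ < 1) :
    IsBallScheme fun n (x : ↥(evZero K)ᶜ) => tailRadius π n x where
  pos n x := mul_pos (pow_pos hπ0 _) (tailNorm_pos x n)
  eq_of_dist_le {n x _} h := by
    rw [tailRadius, tailRadius, tailNorm_eq_of_dist_le_tailRadius hπ1 (tailNorm_pos x n) h]
  succ_le n x := mul_le_mul (pow_le_pow_of_le_one hπ0.le hπ1.le (n + 1).le_succ)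
    (tailNorm_succ_le n _) (tailNorm_pos x (n + 1)).le (by positivity)
  tendsto_zero x := by
    refine squeeze_zero (fun n => mul_nonneg (by positivity) (tailNorm_nonneg n _))
      (fun n => mul_le_mul_of_nonneg_left (tailNorm_le_norm n _) (by positivity)) ?_
    simpa using ((tendsto_pow_atTop_nhds_zero_of_lt_one hπ0.le hπ1).comp
      (tendsto_add_atTop_nat 1)).mul_const ‖(x : C₀(ℕ, K))‖
  exists_root := exists_pairwise_tailRadius_zero_lt_dist hπ0 hπ1
  exists_branch := exists_pairwise_tailRadius_succ_lt_dist hπ0 hπ1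
  exists_limit _ := exists_dist_le_tailRadius hπ0 hπ1

end SequenceSpace

/-- Let `K` be a locally compact field with a complete
non-Archimedean multiplicative norm whose value group is nontrivial.  The space
`c₀ \ ⋃_{j=1}^∞ Eʲ`, with the subspace topology, is homeomorphic to `c₀ = c₀(ℕ, K)`. -/
theorem c0_sdiff_evZero_homeomorph (K : Type*) [NontriviallyNormedField K]
    [IsUltrametricDist K] [CompleteSpace K] [LocallyCompactSpace K] :
    Nonempty (↥((evZero K)ᶜ) ≃ₜ C₀(ℕ, K)) := by
  obtain ⟨π, hπ0, hπ1⟩ := NormedField.exists_norm_lt_one K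
  have := ProperSpace.of_nontriviallyNormedField_of_weaklyLocallyCompactSpace K
  obtain ⟨e₁⟩ := (isBallScheme_tailRadius hπ0 hπ1).nonempty_homeomorph
  obtain ⟨e₂⟩ := (isBallScheme_pow hπ0 hπ1).nonempty_homeomorph
  exact ⟨e₁.trans e₂.symm⟩
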